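/- Let n ≥ 1, N ≥ 0 and let (ε_{i,j}) (i ∈ {0,…,N}, j ∈ {1,2}) be an admissible family of steps which additionally satisfies ε_{i,2} < ε_{i-1,1}/2 for every i ∈ {1,…,N}. If A ⊆ ℝⁿ is a Borel set with prescribed (ε_{i,j})-steps, then A can be covered by at most p_N = 3^{nN} · ∏_{i=0}^{N-1} (ε_{i,2}/ε_{i,1})^n closed balls of radius ε_{N,2}; that is, there exists a finite set F ⊆ ℝⁿ with cardinality at most p_N such that A is contained in the union of the closed balls of radius ε_{N,2} centered at the points of F. -/

import Mathlib

/-!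
Induct on `N`. Distances within `A` are at most `ε₂ 0`, and, by the gap condition, either at
most `ε₂ 1` or at least `ε₁ 0`. A maximal `ε₂ 1`-separated subset `S` of `A` is therefore
`ε₁ 0`-separated inside a set of diameter `ε₂ 0`, so comparing Lebesgue volumes of disjoint
balls gives `#S ≤ 3 ^ n (ε₂ 0 / ε₁ 0) ^ n`; by maximality the balls of radius `ε₂ 1` around `S`
cover `A`. Each piece `A ∩ closedBall x (ε₂ 1)` has diameter at most `2 ε₂ 1 < ε₁ 0`, so the
step `0` no longer occurs in it and it has the shifted steps `(ε_{i+1,j})`, to which the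
induction hypothesis applies.
-/

open MeasureTheory Metric Module Finset
open scoped ENNReal NNReal

section Packing

variable {E : Type*} [NormedAddCommGroup E] [NormedSpace ℝ E] [FiniteDimensional ℝ E]

theorem Finset.card_mul_pow_le_of_subset_closedBall {s : Finset E} {x₀ : E} {δ R : ℝ}
    (hδ : 0 < δ) (hR : 0 ≤ R) (hsep : (s : Set E).Pairwise (δ ≤ dist · ·))
    (hs : (s : Set E) ⊆ closedBall x₀ R) :
    (#s : ℝ) * (δ / 2) ^ finrank ℝ E ≤ (R + δ / 2) ^ finrank ℝ E := by
  borelize E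
  set μ : Measure E := Measure.addHaar
  have hdisj : (s : Set E).PairwiseDisjoint (ball · (δ / 2)) := fun x hx y hy hxy =>
    ball_disjoint_ball (by linarith [hsep hx hy hxy])
  have hsub : ⋃ x ∈ s, ball x (δ / 2) ⊆ ball x₀ (R + δ / 2) :=
    Set.iUnion₂_subset fun x hx => ball_subset_ball' (by linarith [mem_closedBall.1 (hs hx)])
  have hvol : (#s : ℝ≥0∞) * (ENNReal.ofReal ((δ / 2) ^ finrank ℝ E) * μ (ball 0 1)) ≤
      ENNReal.ofReal ((R + δ / 2) ^ finrank ℝ E) * μ (ball 0 1) :=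
    calc _ = ∑ x ∈ s, μ (ball x (δ / 2)) := by
            simp [Measure.addHaar_ball_of_pos μ _ (half_pos hδ)]
      _ = μ (⋃ x ∈ s, ball x (δ / 2)) :=
            (measure_biUnion_finset hdisj fun _ _ => measurableSet_ball).symm
      _ ≤ μ (ball x₀ (R + δ / 2)) := measure_mono hsub
      _ = _ := Measure.addHaar_ball_of_pos μ _ (by positivity)
  rwa [← mul_assoc, ENNReal.mul_le_mul_iff_left (measure_ball_pos μ 0 one_pos).ne'
    measure_ball_lt_top.ne, ← ENNReal.ofReal_natCast, ← ENNReal.ofReal_mul (by positivity),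
    ENNReal.ofReal_le_ofReal_iff (by positivity)] at hvol

theorem Finset.card_le_of_pairwise_le_dist {s : Finset E} {δ R : ℝ} (hδ : 0 < δ) (hδR : δ ≤ R)
    (hsep : (s : Set E).Pairwise (δ ≤ dist · ·)) (hdiam : ∀ x ∈ s, ∀ y ∈ s, dist x y ≤ R) :
    (#s : ℝ) ≤ 3 ^ finrank ℝ E * (R / δ) ^ finrank ℝ E := by
  have hR : 0 < R := hδ.trans_le hδR
  rcases s.eq_empty_or_nonempty with rfl | ⟨x₀, hx₀⟩
  · simp only [card_empty, Nat.cast_zero]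
    positivity
  have hvol := s.card_mul_pow_le_of_subset_closedBall hδ hR.le hsep
    fun x hx => mem_closedBall.2 (hdiam x hx x₀ hx₀)
  have hball : (R + δ / 2) ^ finrank ℝ E ≤ (3 * (R / δ)) ^ finrank ℝ E * (δ / 2) ^ finrank ℝ E := by
    rw [← mul_pow]
    refine pow_le_pow_left₀ (by positivity) ?_ _
    field_simp
    linarith
  rw [← mul_pow]
  exact le_of_mul_le_mul_right (hvol.trans hball) (by positivity)

end Packing

theorem Metric.packingNumber_le_of_forall_finset_card_le {X : Type*} [PseudoEMetricSpace X]
    {ε : ℝ≥0} {A : Set X} {K : ℕ}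
    (hK : ∀ C : Finset X, ↑C ⊆ A → IsSeparated ε (C : Set X) → #C ≤ K) :
    packingNumber ε A ≤ K := by
  refine iSup₂_le fun C hCA => iSup_le fun hC => ?_
  by_contra! hlt
  obtain ⟨t, htC, ht⟩ := Set.exists_subset_encard_eq (Order.add_one_le_of_lt hlt)
  have htfin : t.Finite := Set.encard_ne_top_iff.1 (by rw [ht]; exact ENat.natCast_ne_top (K + 1))
  have hcard := hK htfin.toFinset (by simpa using htC.trans hCA) (by simpa using hC.subset htC)
  have htcard : #htfin.toFinset = K + 1 := by
    rw [htfin.encard_eq_coe_toFinset_card] at ht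
    exact_mod_cast ht
  omega

def StrictAntiSteps (ε₁ ε₂ : ℕ → ℝ) (N : ℕ) : Prop :=
  ∀ i < N, 0 < ε₂ (i + 1) ∧ ε₂ (i + 1) < ε₁ i ∧ ε₁ i < ε₂ i

def HasPrescribedSteps {X : Type*} [PseudoMetricSpace X] (ε₁ ε₂ : ℕ → ℝ) (N : ℕ) (A : Set X) :
    Prop :=
  ∀ x ∈ A, ∀ y ∈ A, ∃ i ≤ N, dist x y ∈ Set.Icc (ε₁ i) (ε₂ i)

namespace StrictAntiSteps

variable {ε₁ ε₂ : ℕ → ℝ} {N : ℕ}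

theorem antitoneOn (h : StrictAntiSteps ε₁ ε₂ N) : AntitoneOn ε₂ (Set.Iic N) := by
  intro i _ j hj hij
  induction j, hij using Nat.le_induction with
  | base => exact le_rfl
  | succ j _ ih =>
    obtain ⟨-, hlt₁, hlt₂⟩ := h j hj
    exact (hlt₁.trans hlt₂).le.trans (ih (Set.mem_Iic.2 (Nat.le_of_succ_le hj)))

theorem shift (h : StrictAntiSteps ε₁ ε₂ (N + 1)) :
    StrictAntiSteps (fun i => ε₁ (i + 1)) (fun i => ε₂ (i + 1)) N :=
  fun i hi => h (i + 1) (by omega)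

theorem div_pos (h : StrictAntiSteps ε₁ ε₂ N) {i : ℕ} (hi : i < N) : 0 < ε₂ i / ε₁ i := by
  obtain ⟨hpos, hlt₁, hlt₂⟩ := h i hi
  exact _root_.div_pos (by linarith) (by linarith)

end StrictAntiSteps

namespace HasPrescribedSteps

section Metric

variable {X : Type*} [PseudoMetricSpace X] {ε₁ ε₂ : ℕ → ℝ} {N : ℕ} {A : Set X} {x y : X}

theorem dist_le (hε : StrictAntiSteps ε₁ ε₂ N) (hA : HasPrescribedSteps ε₁ ε₂ N A)
    (hx : x ∈ A) (hy : y ∈ A) : dist x y ≤ ε₂ 0 := by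
  obtain ⟨i, hi, -, hle⟩ := hA x hx y hy
  exact hle.trans (hε.antitoneOn (Set.mem_Iic.2 (Nat.zero_le N)) hi (Nat.zero_le i))

theorem le_dist_of_lt_dist (hε : StrictAntiSteps ε₁ ε₂ N) (hA : HasPrescribedSteps ε₁ ε₂ N A)
    (hx : x ∈ A) (hy : y ∈ A) (hxy : ε₂ 1 < dist x y) : ε₁ 0 ≤ dist x y := by
  obtain ⟨_ | i, hi, hge, hle⟩ := hA x hx y hy
  · exact hge
  · have := hε.antitoneOn (Set.mem_Iic.2 (by omega : 1 ≤ N)) hi (by omega : 1 ≤ i + 1)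
    linarith

theorem inter_closedBall (hgap : 2 * ε₂ 1 < ε₁ 0) (hA : HasPrescribedSteps ε₁ ε₂ (N + 1) A)
    (x : X) :
    HasPrescribedSteps (fun i => ε₁ (i + 1)) (fun i => ε₂ (i + 1)) N (A ∩ closedBall x (ε₂ 1)) := by
  rintro y ⟨hyA, hyx⟩ z ⟨hzA, hzx⟩
  have hyz : dist y z < ε₁ 0 := by
    linarith [dist_triangle_right y z x, mem_closedBall.1 hyx, mem_closedBall.1 hzx]
  obtain ⟨_ | i, hi, hge, hle⟩ := hA y hyA z hzA
  · exact absurd hge (not_le.2 hyz)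
  · exact ⟨i, by omega, hge, hle⟩

end Metric

variable {E : Type*} [NormedAddCommGroup E] [NormedSpace ℝ E] [FiniteDimensional ℝ E]
  {ε₁ ε₂ : ℕ → ℝ} {N : ℕ} {A : Set E}

theorem exists_finset_net (hε : StrictAntiSteps ε₁ ε₂ (N + 1))
    (hA : HasPrescribedSteps ε₁ ε₂ (N + 1) A) :
    ∃ S : Finset E, ↑S ⊆ A ∧ (#S : ℝ) ≤ 3 ^ finrank ℝ E * (ε₂ 0 / ε₁ 0) ^ finrank ℝ E ∧
      A ⊆ ⋃ x ∈ S, closedBall x (ε₂ 1) := by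
  obtain ⟨hpos, hlt₁, hlt₂⟩ := hε 0 N.succ_pos
  set r : ℝ≥0 := ⟨ε₂ 1, hpos.le⟩
  have hcard : ∀ C : Finset E, ↑C ⊆ A → IsSeparated r (C : Set E) →
      (#C : ℝ) ≤ 3 ^ finrank ℝ E * (ε₂ 0 / ε₁ 0) ^ finrank ℝ E := by
    refine fun C hCA hC => C.card_le_of_pairwise_le_dist (by linarith) hlt₂.le
      (fun x hx y hy hxy => hA.le_dist_of_lt_dist hε (hCA hx) (hCA hy) ?_)
      fun x hx y hy => hA.dist_le hε (hCA hx) (hCA hy)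
    have : (r : ℝ≥0∞) < edist x y := hC hx hy hxy
    rwa [edist_nndist, ENNReal.coe_lt_coe, ← NNReal.coe_lt_coe, coe_nndist] at this
  have hpack : packingNumber r A ≠ ⊤ :=
    ((packingNumber_le_of_forall_finset_card_le fun C hCA hC =>
      Nat.le_floor (hcard C hCA hC)).trans_lt (ENat.natCast_lt_top _)).ne
  have hfin : (maximalSeparatedSet r A).Finite :=
    Set.encard_ne_top_iff.1 (encard_maximalSeparatedSet hpack ▸ hpack)
  refine ⟨hfin.toFinset, by simpa using maximalSeparatedSet_subset,
    hcard _ (by simpa using maximalSeparatedSet_subset)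
      (by simpa using isSeparated_maximalSeparatedSet), ?_⟩
  simp only [Set.Finite.mem_toFinset]
  exact (isCover_maximalSeparatedSet hpack).subset_iUnion_closedBall

theorem exists_finset_cover (hε : StrictAntiSteps ε₁ ε₂ N)
    (hgap : ∀ i < N, 2 * ε₂ (i + 1) < ε₁ i) (hA : HasPrescribedSteps ε₁ ε₂ N A) :
    ∃ F : Finset E,
      (#F : ℝ) ≤ 3 ^ (finrank ℝ E * N) * ∏ i ∈ range N, (ε₂ i / ε₁ i) ^ finrank ℝ E ∧
      A ⊆ ⋃ c ∈ F, closedBall c (ε₂ N) := by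
  induction N generalizing ε₁ ε₂ A with
  | zero =>
    rcases A.eq_empty_or_nonempty with rfl | ⟨x₀, hx₀⟩
    · exact ⟨∅, by simp, by simp⟩
    refine ⟨{x₀}, by simp, fun y hy => ?_⟩
    simpa [dist_comm] using hA.dist_le hε hx₀ hy
  | succ N ih =>
    classical
    set d := finrank ℝ E
    obtain ⟨S, hSA, hScard, hScover⟩ := hA.exists_finset_net hε
    have hpiece (x : E) : ∃ F : Finset E,
        (#F : ℝ) ≤ 3 ^ (d * N) * ∏ i ∈ range N, (ε₂ (i + 1) / ε₁ (i + 1)) ^ d ∧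
        A ∩ closedBall x (ε₂ 1) ⊆ ⋃ c ∈ F, closedBall c (ε₂ (N + 1)) :=
      ih hε.shift (fun i hi => hgap (i + 1) (by omega))
        (hA.inter_closedBall (hgap 0 N.succ_pos) x)
    choose F hFcard hFcover using hpiece
    have hbound : 0 ≤ 3 ^ (d * N) * ∏ i ∈ range N, (ε₂ (i + 1) / ε₁ (i + 1)) ^ d :=
      mul_nonneg (by positivity) <|
        prod_nonneg fun i hi => (pow_pos (hε.shift.div_pos (mem_range.1 hi)) d).le
    refine ⟨S.biUnion F, ?_, fun y hy => ?_⟩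
    · calc (#(S.biUnion F) : ℝ) ≤ ∑ x ∈ S, (#(F x) : ℝ) := by exact_mod_cast card_biUnion_le
        _ ≤ #S * (3 ^ (d * N) * ∏ i ∈ range N, (ε₂ (i + 1) / ε₁ (i + 1)) ^ d) := by
          rw [← nsmul_eq_mul, ← sum_const]
          exact sum_le_sum fun x _ => hFcard x
        _ ≤ 3 ^ d * (ε₂ 0 / ε₁ 0) ^ d *
              (3 ^ (d * N) * ∏ i ∈ range N, (ε₂ (i + 1) / ε₁ (i + 1)) ^ d) :=
          mul_le_mul_of_nonneg_right hScard hbound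
        _ = 3 ^ (d * (N + 1)) * ∏ i ∈ range (N + 1), (ε₂ i / ε₁ i) ^ d := by
          rw [prod_range_succ', Nat.mul_succ, pow_add]
          ring
    · obtain ⟨x, hxS, hyx⟩ : ∃ x ∈ S, y ∈ closedBall x (ε₂ 1) := by
        simpa using hScover hy
      obtain ⟨c, hc, hyc⟩ : ∃ c ∈ F x, y ∈ closedBall c (ε₂ (N + 1)) := by
        simpa using hFcover x ⟨hy, hyx⟩
      exact Set.mem_biUnion (mem_biUnion.2 ⟨x, hxS, hc⟩) hyc

end HasPrescribedSteps

theorem stmt_1_general (n N : ℕ) (ε₁ ε₂ : ℕ → ℝ)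
    (hadm : ∀ i < N, 0 < ε₂ (i + 1) ∧ ε₂ (i + 1) < ε₁ i ∧ ε₁ i < ε₂ i)
    (hsep : ∀ i, 1 ≤ i → i ≤ N → ε₂ i < ε₁ (i - 1) / 2)
    (A : Set (EuclideanSpace ℝ (Fin n)))
    (hsteps : ∀ x ∈ A, ∀ y ∈ A, ∃ i ≤ N, ‖x - y‖ ∈ Set.Icc (ε₁ i) (ε₂ i)) :
    ∃ F : Finset (EuclideanSpace ℝ (Fin n)),
      (F.card : ℝ) ≤ 3 ^ (n * N) * ∏ i ∈ Finset.range N, (ε₂ i / ε₁ i) ^ n ∧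
      A ⊆ ⋃ c ∈ F, Metric.closedBall c (ε₂ N) := by
  have hgap : ∀ i < N, 2 * ε₂ (i + 1) < ε₁ i := fun i hi => by
    have := hsep (i + 1) (by omega) hi
    rw [Nat.add_sub_cancel] at this
    linarith
  have hA : HasPrescribedSteps ε₁ ε₂ N A := by
    simpa only [HasPrescribedSteps, dist_eq_norm] using hsteps
  simpa only [finrank_euclideanSpace_fin] using HasPrescribedSteps.exists_finset_cover hadm hgap hA

/-- a set with prescribed steps is covered by at most
`p_N = 3^{nN} ∏ (ε_{i,2}/ε_{i,1})^n` closed balls of radius `ε_{N,2}`. -/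
theorem stmt_1 (n N : ℕ) (hn : 1 ≤ n) (ε₁ ε₂ : ℕ → ℝ)
    (hnonneg : ∀ i ≤ N, 0 ≤ ε₁ i ∧ 0 ≤ ε₂ i)
    (hadm : ∀ i < N, 0 < ε₂ (i + 1) ∧ ε₂ (i + 1) < ε₁ i ∧ ε₁ i < ε₂ i)
    (hN1 : ε₁ N = 0) (hN2 : 0 < ε₂ N)
    (hsep : ∀ i, 1 ≤ i → i ≤ N → ε₂ i < ε₁ (i - 1) / 2)
    (A : Set (EuclideanSpace ℝ (Fin n))) (hA : MeasurableSet A)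
    (hsteps : ∀ x ∈ A, ∀ y ∈ A, ∃ i ≤ N, ‖x - y‖ ∈ Set.Icc (ε₁ i) (ε₂ i)) :
    ∃ F : Finset (EuclideanSpace ℝ (Fin n)),
      (F.card : ℝ) ≤ 3 ^ (n * N) * ∏ i ∈ Finset.range N, (ε₂ i / ε₁ i) ^ n ∧
      A ⊆ ⋃ c ∈ F, Metric.closedBall c (ε₂ N) :=
  stmt_1_general n N ε₁ ε₂ hadm hsep A hsteps
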